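/- If G is a connected finite simple graph with no even cycle, and u, v are two vertices lying on a common cycle of G at distance 2 along that cycle, then the graph G' = KT(G, u, v) obtained by the Kelmans transformation with beneficiary u also has no even cycle. -/

import Mathlib

open Polynomial

/-- Number of matchings with exactly `k` edges in `G`. -/
noncomputable def matchingCount {V : Type*} [Fintype V] (G : SimpleGraph V) (k : ℕ) : ℕ :=
  Nat.card {s : Finset (Sym2 V) // s.card = k ∧ (∀ e ∈ s, e ∈ G.edgeSet) ∧
    ∀ e ∈ s, ∀ f ∈ s, e ≠ f → ∀ x : V, x ∈ e → x ∉ f}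

/-- The matching polynomial `m(G,x) = ∑ (-1)^k m_k(G) x^(n-2k)`. -/
noncomputable def matchPoly {V : Type*} [Fintype V] (G : SimpleGraph V) : Polynomial ℝ :=
  ∑ k ∈ Finset.range (Fintype.card V + 1),
    Polynomial.C ((-1 : ℝ) ^ k * (matchingCount G k : ℝ)) *
      Polynomial.X ^ (Fintype.card V - 2 * k)

/-- The maximum real root `t(G)` of the matching polynomial. -/
noncomputable def maxRoot {V : Type*} [Fintype V] (G : SimpleGraph V) : ℝ :=
  sSup {x : ℝ | (matchPoly G).eval x = 0}

/-- `w` is a neighbour of `v` that gets moved to `u` by the Kelmans transformation. -/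
def movedNbr {V : Type*} (G : SimpleGraph V) (u v w : V) : Prop :=
  G.Adj v w ∧ w ≠ u ∧ ¬ G.Adj u w

/-- The Kelmans transformation of `G` with beneficiary `u` and co-beneficiary `v`:
every edge `vw` with `w ≠ u`, `w` not adjacent to `u`, is replaced by the edge `uw`. -/
def kelmans {V : Type*} (G : SimpleGraph V) (u v : V) : SimpleGraph V where
  Adj a b :=
    (G.Adj a b ∧ ¬ (a = v ∧ movedNbr G u v b) ∧ ¬ (b = v ∧ movedNbr G u v a))
    ∨ (a = u ∧ movedNbr G u v b) ∨ (b = u ∧ movedNbr G u v a)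
  symm := by
    constructor
    intro a b h
    rcases h with ⟨h1, h2, h3⟩ | h | h
    · exact Or.inl ⟨h1.symm, h3, h2⟩
    · exact Or.inr (Or.inr h)
    · exact Or.inr (Or.inl h)
  loopless := by
    constructor
    intro a h
    rcases h with ⟨h1, _, _⟩ | ⟨rfl, _, hne, _⟩ | ⟨rfl, _, hne, _⟩
    · exact G.irrefl h1
    · exact hne rfl
    · exact hne rfl


/-!
Since `w` is the only common neighbour of `u` and `v` (a second one would close a 4-cycle),
`v` keeps only the neighbours `u` and `w` in `KT(G, u, v)`. A cycle of `KT(G, u, v)` avoiding `u`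
is a cycle of `G`. A cycle through `u` is a path `p` of `G` avoiding `u` between two neighbours
`a`, `b` of `u`, and in almost all cases `p` can be closed in `G`, through `u`, `v` or `w`,
into a cycle whose length has the parity of `|p| + 2`. The exception is when `a` was moved from
`v`, `u b` is an edge of `G` and `p` passes `w` before `b`: then the edge `u w` lies on two
different cycles, and a cycle together with an ear whose ends split it (a theta graph) always
contains an even cycle.
-/

namespace SimpleGraph

variable {V : Type*} {G : SimpleGraph V}

def NoEvenCycle (G : SimpleGraph V) : Prop :=
  ∀ (z : V) (c : G.Walk z z), c.IsCycle → ¬ Even c.length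

namespace Walk

lemma IsPath.isCycle_cons_cons {a b x : V} {p : G.Walk a b} (hp : p.IsPath) (hab : a ≠ b)
    (hx : x ∉ p.support) (hxa : G.Adj x a) (hbx : G.Adj b x) :
    (cons hbx (cons hxa p)).IsCycle := by
  refine (cons_isCycle_iff _ _).mpr ⟨(cons_isPath_iff _ _).mpr ⟨hp, hx⟩, ?_⟩
  intro he
  rcases List.mem_cons.mp (edges_cons hxa p ▸ he) with he | he
  · rcases Sym2.eq_iff.mp he with ⟨-, hxa'⟩ | ⟨hba, -⟩
    · exact hxa.ne hxa'
    · exact hab hba.symm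
  · exact hx (p.snd_mem_support_of_mem_edges he)

lemma IsCycle.exists_walk_not_mem_support [DecidableEq V] {u v w : V} {c : G.Walk u u}
    (hc : c.IsCycle) (hv : v ∈ c.support) (hwu : w ≠ u) (hwv : w ≠ v) :
    ∃ W : G.Walk v u, w ∉ W.support := by
  by_cases hw : w ∈ (c.dropUntil v hv).support
  · refine ⟨(c.takeUntil v hv).reverse, fun hw' => ?_⟩
    have hnodup := hc.support_nodup
    rw [← c.take_spec hv, tail_support_append, List.nodup_append'] at hnodup
    rw [support_reverse, List.mem_reverse] at hw'
    have hwt : w ∈ (c.takeUntil v hv).support.tail :=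
      (List.mem_cons.mp ((c.takeUntil v hv).cons_tail_support ▸ hw')).resolve_left hwu
    have hwd : w ∈ (c.dropUntil v hv).support.tail :=
      (List.mem_cons.mp ((c.dropUntil v hv).cons_tail_support ▸ hw)).resolve_left hwv
    exact hnodup.2.2 hwt hwd
  · exact ⟨c.dropUntil v hv, hw⟩

lemma IsCycle.exists_isPath_of_mem_support [DecidableEq V] {z u : V} {c : G.Walk z z}
    (hc : c.IsCycle) (hu : u ∈ c.support) :
    ∃ (a b : V) (p : G.Walk a b), p.IsPath ∧ u ∉ p.support ∧ a ≠ b ∧ G.Adj u a ∧ G.Adj u b ∧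
      c.length = p.length + 2 := by
  have hd := hc.rotate hu
  have hlen := c.length_rotate u hu
  generalize c.rotate u hu = d at hd hlen
  cases d with
  | nil => exact absurd hd not_isCycle_nil
  | cons hua q =>
    have hq := ((cons_isCycle_iff _ _).mp hd).1
    have hq_nil : ¬ q.Nil := not_nil_of_isCycle_cons hd
    refine ⟨_, q.penultimate, q.dropLast, hq.dropLast, fun huq => ?_, ?_, hua,
      (q.adj_penultimate hq_nil).symm, ?_⟩
    · have hnodup := hq.support_nodup
      rw [← q.dropLast_support_concat, List.nodup_append'] at hnodup
      exact hnodup.2.2 (support_dropLast hq_nil ▸ huq) (List.mem_singleton_self u)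
    · simpa [penultimate_cons_of_not_nil _ _ hq_nil] using hd.snd_ne_penultimate
    · rw [← hlen, length_cons, ← length_dropLast_add_one hq_nil]

lemma IsPath.not_mem_support_of_neighborSet_subset {u v w a b : V} {p : G.Walk a b}
    (hp : p.IsPath) (hN : G.neighborSet v ⊆ {u, w}) (hu : u ∉ p.support) (ha : a ≠ v)
    (hb : b ≠ v) : v ∉ p.support := by
  induction p with
  | nil => simpa using ha.symm
  | @cons a c b hac q ih =>
    obtain ⟨hq, haq⟩ := (cons_isPath_iff _ _).mp hp
    rw [support_cons, List.mem_cons, not_or] at hu ⊢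
    refine ⟨ha.symm, ?_⟩
    by_cases hc : c = v
    · subst hc
      cases q with
      | nil => exact absurd rfl hb
      | @cons _ d _ hcd q =>
        have hd : d = w := (hN hcd).resolve_left fun h => hu.2 (h ▸ by simp)
        have ha' : a = w := (hN hac.symm).resolve_left fun h => hu.1 h.symm
        rw [ha', ← hd] at haq
        exact (haq (by simp)).elim
    · exact ih hq hu.2 hc hb

lemma exists_support_subset_forall_mem_eq {a b : V} (p : G.Walk a b) {S : Set V} (hb : b ∈ S) :
    ∃ m ∈ S, ∃ q : G.Walk a m, q.support ⊆ p.support ∧ ∀ x ∈ q.support, x ∈ S → x = m := by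
  induction p with
  | nil => exact ⟨_, hb, nil, List.Subset.refl _, by simp⟩
  | @cons a _ _ h p ih =>
    by_cases ha : a ∈ S
    · exact ⟨a, ha, nil, by simp, by simp⟩
    obtain ⟨m, hm, q, hsub, hfirst⟩ := ih hb
    refine ⟨m, hm, cons h q, List.cons_subset_cons _ hsub, fun x hx hxS => ?_⟩
    rcases List.mem_cons.mp hx with rfl | hx
    · exact absurd hxS ha
    · exact hfirst x hx hxS

end Walk

namespace NoEvenCycle

open Walk

variable (hG : G.NoEvenCycle)
include hG

theorem odd_length_of_isPath {a b x : V} {p : G.Walk a b} (hp : p.IsPath) (hab : a ≠ b)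
    (hx : x ∉ p.support) (hxa : G.Adj x a) (hbx : G.Adj b x) : Odd p.length := by
  have := hG _ _ (hp.isCycle_cons_cons hab hx hxa hbx)
  rwa [length_cons, length_cons, Nat.even_add_one, Nat.even_add_one, not_not,
    Nat.not_even_iff_odd] at this

theorem eq_of_adj_of_adj {u v w x : V} (huv : u ≠ v) (huw : G.Adj u w) (hwv : G.Adj w v)
    (hux : G.Adj u x) (hxv : G.Adj x v) : x = w := by
  by_contra hxw
  have hp : (cons hwv (cons hxv.symm nil)).IsPath := by
    simp [hwv.ne, hxv.ne', Ne.symm hxw]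
  have := hG.odd_length_of_isPath hp (Ne.symm hxw) (by simp [huw.ne, huv, hux.ne]) huw hux.symm
  exact Nat.not_odd_iff_even.mpr even_two this

theorem length_le_one_of_isPath [DecidableEq V] {s t : V} {C : G.Walk s s} (hC : C.IsCycle)
    (ht : t ∈ C.support) {Q : G.Walk s t} (hQ : Q.IsPath)
    (hQC : ∀ x ∈ Q.support, x ∈ C.support → x = s ∨ x = t) : Q.length ≤ 1 := by
  by_contra! hlen
  have hst : s ≠ t := by
    rintro rfl
    simp [length_eq_zero_iff.mpr (isPath_iff_nil.mp hQ)] at hlen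
  set α := C.takeUntil t ht
  set β := C.dropUntil t ht
  have hαβ : α.length + β.length = C.length := by
    rw [← length_append, take_spec]
  have hα : α.IsPath := hC.isPath_takeUntil ht
  have hβ : β.IsPath :=
    IsCycle.isPath_of_append_right (not_nil_of_ne hst) (by rwa [take_spec])
  -- `Q` closes up with either arc of `C` between `s` and `t`; the lengths of these two cycles
  -- and of `C` add up to an even number, so they cannot all be odd
  have hdisj : ∀ P : G.Walk t s, P.IsPath → P.support ⊆ C.support →
      Q.support.tail.Disjoint P.support.tail := by
    intro P hP hPC x hxQ hxP
    rcases hQC x (List.mem_of_mem_tail hxQ) (hPC (List.mem_of_mem_tail hxP)) with rfl | rfl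
    · exact (List.nodup_cons.mp (Q.cons_tail_support ▸ hQ.support_nodup)).1 hxQ
    · exact (List.nodup_cons.mp (P.cons_tail_support ▸ hP.support_nodup)).1 hxP
  have hβC := hG _ _ (hQ.isCycle_append hβ (hdisj β hβ (C.support_dropUntil_subset_support ht))
    (Or.inl hlen))
  have hαC := hG _ _ (hQ.isCycle_append hα.reverse
    (hdisj α.reverse hα.reverse (by simpa using C.support_takeUntil_subset_support ht))
    (Or.inl hlen))
  have hCodd := hG _ _ hC
  rw [← hαβ, Nat.even_add] at hCodd
  rw [length_append, Nat.even_add] at hβC hαC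
  rw [length_reverse] at hαC
  tauto

theorem mem_support_of_adj_of_not_mem_support {s x t : V} {C : G.Walk s s} (hC : C.IsCycle)
    (hx : x ∉ C.support) (hsx : G.Adj s x) (W : G.Walk x t) (ht : t ∈ C.support) :
    s ∈ W.support := by
  classical
  by_contra hsW
  obtain ⟨m, hm, q, hqW, hfirst⟩ :=
    W.exists_support_subset_forall_mem_eq (S := {y | y ∈ C.support}) ht
  have hR := q.bypass_isPath
  have hRq := q.support_bypass_subset_support
  have hQ : (cons hsx q.bypass).IsPath :=
    (cons_isPath_iff _ _).mpr ⟨hR, fun hs => hsW (hqW (hRq hs))⟩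
  have hlen := hG.length_le_one_of_isPath hC hm hQ fun y hy hyC => by
    rcases List.mem_cons.mp hy with rfl | hy
    · exact Or.inl rfl
    · exact Or.inr (hfirst y (hRq hy) hyC)
  have hxm : q.bypass.length ≠ 0 := fun h => hx (eq_of_length_eq_zero h ▸ hm)
  rw [length_cons] at hlen
  omega

end NoEvenCycle

variable {u v w : V}

lemma kelmans_adj_of_ne {x y : V} (h : (kelmans G u v).Adj x y) (hx : x ≠ u) (hy : y ≠ u) :
    G.Adj x y := by
  rcases h with ⟨h, -, -⟩ | ⟨rfl, -⟩ | ⟨rfl, -⟩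
  · exact h
  · exact absurd rfl hx
  · exact absurd rfl hy

lemma adj_or_movedNbr_of_kelmans_adj {z : V} (h : (kelmans G u v).Adj u z) :
    G.Adj u z ∨ movedNbr G u v z := by
  rcases h with ⟨h, -, -⟩ | ⟨-, hm⟩ | ⟨rfl, hm⟩
  · exact Or.inl h
  · exact Or.inr hm
  · exact absurd rfl hm.2.1

lemma kelmans_neighborSet_subset (hw : ∀ x, G.Adj u x → G.Adj v x → x = w) :
    (kelmans G u v).neighborSet v ⊆ {u, w} := by
  intro z hz
  rcases hz with ⟨hvz, hnm, -⟩ | ⟨rfl, hm⟩ | ⟨rfl, -⟩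
  · by_cases hzu : z = u
    · exact Or.inl hzu
    · exact Or.inr (hw z (by_contra fun huz => hnm ⟨rfl, hvz, hzu, huz⟩) hvz)
  · exact absurd hm.1 hm.2.2
  · exact Or.inl rfl

lemma kelmans_walk_edge_mem_edgeSet {a b : V} (p : (kelmans G u v).Walk a b)
    (hu : u ∉ p.support) : ∀ e ∈ p.edges, e ∈ G.edgeSet := by
  intro e
  induction e using Sym2.ind with
  | _ x y =>
    intro he
    refine kelmans_adj_of_ne (p.adj_of_mem_edges he) ?_ ?_
    · exact fun h => hu (h ▸ p.fst_mem_support_of_mem_edges he)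
    · exact fun h => hu (h ▸ p.snd_mem_support_of_mem_edges he)

namespace NoEvenCycle

open Walk

variable (hG : G.NoEvenCycle) (huw : G.Adj u w) (hwv : G.Adj w v) {W : G.Walk v u}
  (hwW : w ∉ W.support)
include hG huw hwv hwW

theorem odd_length_of_movedNbr {a b : V} {P : G.Walk a b} (hP : P.IsPath)
    (hu : u ∉ P.support) (hv : v ∉ P.support) (ha : movedNbr G u v a) (hb : G.Adj u b)
    (hab : a ≠ b) : Odd P.length := by
  classical
  obtain ⟨hva, hau, hua⟩ := ha
  have haw : a ≠ w := fun h => hua (h ▸ huw)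
  have hvu : v ≠ u := fun h => hua (h ▸ hva)
  by_cases hbw : b = w
  · subst hbw
    exact hG.odd_length_of_isPath hP hab hv hva hwv
  by_cases hwP : w ∈ P.support
  · -- `w u b` and the end of `P` from `w` form a cycle through the edge `u w`; `W` would
    -- connect its neighbour `v` back to it while avoiding `w`
    exfalso
    have hT := hP.dropUntil hwP
    have hTP := P.support_dropUntil_subset_support hwP
    have huT : u ∉ (P.dropUntil w hwP).reverse.support := by
      rw [support_reverse, List.mem_reverse]
      exact fun h => hu (hTP h)
    have hB := hT.reverse.isCycle_cons_cons hbw huT hb huw.symm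
    refine hwW (hG.mem_support_of_adj_of_not_mem_support hB ?_ hwv W (by simp))
    simpa [hwv.ne', hvu] using fun h => hv (hTP h)
  · have hQ : (cons huw.symm (cons hb P.reverse)).IsPath := by
      simp [hP.reverse, hu, hwP, huw.ne']
    have := hG.odd_length_of_isPath hQ haw.symm (by simp [hwv.ne', hvu, hv]) hwv.symm hva.symm
    simpa [Nat.odd_add_one] using this

theorem odd_length_of_kelmans_movedNbr (huv : u ≠ v) {a b : V}
    {p : (kelmans G u v).Walk a b} (hp : p.IsPath) (hu : u ∉ p.support)
    (ha : movedNbr G u v a) (hb : G.Adj u b) (hab : a ≠ b) : Odd p.length := by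
  have hN := kelmans_neighborSet_subset
    fun x hux hvx => hG.eq_of_adj_of_adj huv huw hwv hux hvx.symm
  by_cases hbv : b = v
  · -- `p` reaches `v` from `w`, its only neighbour besides `u`
    subst hbv
    obtain ⟨d, hvd, R, hR⟩ := not_nil_iff.mp (not_nil_of_ne (p := p.reverse) ha.1.ne)
    have hpR : p.length = R.length + 1 := by rw [← length_reverse, hR, length_cons]
    have hRp : R.support ⊆ p.support := fun x hx => by
      rw [← List.mem_reverse, ← support_reverse, hR, support_cons]
      exact List.mem_cons_of_mem _ hx
    obtain ⟨hRpath, hvR⟩ := (cons_isPath_iff _ _).mp (hR ▸ hp.reverse)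
    have hd : d = w := (hN hvd).resolve_left fun h => hu (hRp (h ▸ R.start_mem_support))
    subst hd
    have huR : u ∉ R.support := fun h => hu (hRp h)
    have hE := kelmans_walk_edge_mem_edgeSet R huR
    have hQ : (cons huw (R.transfer G hE)).IsPath := by simp [hRpath.transfer, huR]
    rw [hpR]
    simpa using hG.odd_length_of_isPath hQ ha.2.1.symm (by simp [huv.symm, hvR]) hb.symm ha.1.symm
  · have hv := hp.not_mem_support_of_neighborSet_subset hN hu ha.1.ne' hbv
    have hE := kelmans_walk_edge_mem_edgeSet p hu
    simpa using hG.odd_length_of_movedNbr huw hwv hwW (hp.transfer hE)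
      (by simpa using hu) (by simpa using hv) ha hb hab

theorem kelmans (huv : u ≠ v) : (kelmans G u v).NoEvenCycle := by
  classical
  intro z d hd
  by_cases hu : u ∈ d.support
  swap
  · simpa using hG z (d.transfer G (kelmans_walk_edge_mem_edgeSet d hu)) (hd.transfer _)
  obtain ⟨a, b, p, hp, hup, hab, hua, hub, hlen⟩ := hd.exists_isPath_of_mem_support hu
  suffices Odd p.length by simpa [hlen, Nat.even_add_one] using this
  have hE := kelmans_walk_edge_mem_edgeSet p hup
  rcases adj_or_movedNbr_of_kelmans_adj hua with hGa | hMa <;>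
    rcases adj_or_movedNbr_of_kelmans_adj hub with hGb | hMb
  · simpa using hG.odd_length_of_isPath (hp.transfer hE) hab (by simpa using hup) hGa hGb.symm
  · simpa using hG.odd_length_of_kelmans_movedNbr huw hwv hwW huv hp.reverse (by simpa using hup)
      hMb hGa hab.symm
  · exact hG.odd_length_of_kelmans_movedNbr huw hwv hwW huv hp hup hMa hGb hab
  · have hN := kelmans_neighborSet_subset
      fun x hux hvx => hG.eq_of_adj_of_adj huv huw hwv hux hvx.symm
    have hv := hp.not_mem_support_of_neighborSet_subset hN hup hMa.1.ne' hMb.1.ne'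
    simpa using hG.odd_length_of_isPath (hp.transfer hE) hab (by simpa using hv) hMa.1 hMb.1.symm

end NoEvenCycle

end SimpleGraph

theorem kelmans_no_even_cycle_general {V : Type*} (G : SimpleGraph V)
    (hodd : ∀ (z : V) (c : G.Walk z z), c.IsCycle → ¬ Even c.length)
    (u v w : V) (hne : u ≠ v)
    (c : G.Walk u u) (hc : c.IsCycle)
    (h1 : s(u, w) ∈ c.edges) (h2 : s(w, v) ∈ c.edges) :
    ∀ (z : V) (d : (kelmans G u v).Walk z z), d.IsCycle → ¬ Even d.length := by
  classical
  have huw := c.adj_of_mem_edges h1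
  have hwv := c.adj_of_mem_edges h2
  obtain ⟨W, hwW⟩ := hc.exists_walk_not_mem_support (c.snd_mem_support_of_mem_edges h2)
    huw.ne' hwv.ne
  exact SimpleGraph.NoEvenCycle.kelmans hodd huw hwv hwW hne

/-- If `G` is a connected graph with no even cycle and `u, v` lie at distance `2` along a
common cycle (via the path `u-w-v` on the cycle), then the Kelmans transformation
`KT(G,u,v)` also has no even cycle. -/
theorem kelmans_no_even_cycle {V : Type*} [Fintype V] (G : SimpleGraph V)
    (hconn : G.Connected)
    (hodd : ∀ (z : V) (c : G.Walk z z), c.IsCycle → ¬ Even c.length)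
    (u v w : V) (hne : u ≠ v)
    (c : G.Walk u u) (hc : c.IsCycle)
    (h1 : s(u, w) ∈ c.edges) (h2 : s(w, v) ∈ c.edges) :
    ∀ (z : V) (d : (kelmans G u v).Walk z z), d.IsCycle → ¬ Even d.length :=
  kelmans_no_even_cycle_general G hodd u v w hne c hc h1 h2
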